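/- Let V : ℝ³ → ℝ be differentiable with V and x·∇V bounded on ℝ³, and let μ > 0. Then μ · inf{ I_V(φ) : φ differentiable, φ, ∇φ ∈ L²(ℝ³), φ ∈ L⁴(ℝ³), M(φ) ≤ μ, K_{V,2}(φ) ≤ 0, G(φ) ≥ 1 } = inf{ (1/2)G(ψ) + (1/4)∫ μ²·((x·∇V)(μx) + 2V(μx))·|ψ(x)|² dx : ψ differentiable, ψ, ∇ψ ∈ L²(ℝ³), ψ ∈ L⁴(ℝ³), M(ψ) ≤ 1, K₀,₂(ψ) ≤ (1/2)∫ μ²·(x·∇V)(μx)·|ψ(x)|² dx, G(ψ) ≥ μ }, the two admissible sets being in bijective correspondence via the rescaling ψ(x) = μ·φ(μx). -/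

import Mathlib

open MeasureTheory

noncomputable section

abbrev R3 := EuclideanSpace ℝ (Fin 3)

/-- Mass: `M(φ) = (1/2) ∫ |φ|²`. -/
def Mfun {E : Type*} [NormedAddCommGroup E] (φ : R3 → E) : ℝ :=
  (1 / 2) * ∫ x, ‖φ x‖ ^ 2

/-- Kinetic energy: `H₀(φ) = (1/2) ∫ |∇φ|²`. -/
def H0 {E : Type*} [NormedAddCommGroup E] [NormedSpace ℝ E] (φ : R3 → E) : ℝ :=
  (1 / 2) * ∫ x, ‖fderiv ℝ φ x‖ ^ 2

/-- Quartic functional: `G(φ) = (1/4) ∫ |φ|⁴`. -/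
def Gfun {E : Type*} [NormedAddCommGroup E] (φ : R3 → E) : ℝ :=
  (1 / 4) * ∫ x, ‖φ x‖ ^ 4

/-- Free energy: `E₀(φ) = H₀(φ) - G(φ)`. -/
def E0 {E : Type*} [NormedAddCommGroup E] [NormedSpace ℝ E] (φ : R3 → E) : ℝ :=
  H0 φ - Gfun φ

/-- The radial derivative of the potential: `(x·∇V)(x) = ⟨x, ∇V(x)⟩ = (DV(x))(x)`. -/
def xdV (V : R3 → ℝ) (x : R3) : ℝ := fderiv ℝ V x x

/-- Free virial functional: `K₀,₂(φ) = 2H₀(φ) - 3G(φ)`. -/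
def K02 {E : Type*} [NormedAddCommGroup E] [NormedSpace ℝ E] (φ : R3 → E) : ℝ :=
  2 * H0 φ - 3 * Gfun φ

/-- Virial functional with potential:
`K_{V,2}(φ) = 2H₀(φ) - 3G(φ) - (1/2) ∫ (x·∇V) |φ|²`. -/
def K2 {E : Type*} [NormedAddCommGroup E] [NormedSpace ℝ E]
    (V : R3 → ℝ) (φ : R3 → E) : ℝ :=
  2 * H0 φ - 3 * Gfun φ - (1 / 2) * ∫ x, xdV V x * ‖φ x‖ ^ 2

/-- `I_V(φ) = (1/2)G(φ) + (1/4) ∫ ((x·∇V) + 2V) |φ|²`. -/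
def IV {E : Type*} [NormedAddCommGroup E] (V : R3 → ℝ) (φ : R3 → E) : ℝ :=
  (1 / 2) * Gfun φ + (1 / 4) * ∫ x, (xdV V x + 2 * V x) * ‖φ x‖ ^ 2

/-- Energy with potential: `E_V(φ) = H₀(φ) + (1/2)∫ V|φ|² - G(φ)`. -/
def EV {E : Type*} [NormedAddCommGroup E] [NormedSpace ℝ E]
    (V : R3 → ℝ) (φ : R3 → E) : ℝ :=
  H0 φ + (1 / 2) * ∫ x, V x * ‖φ x‖ ^ 2 - Gfun φ

/-!
The substitution `ψ = μ φ(μ ·)` is a bijection of functions on `ℝ³`, with inverse the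
substitution by `μ⁻¹`, and it preserves differentiability and the integrability conditions.
Changing variables, it multiplies the mass by `μ⁻¹`, the kinetic and quartic energies by `μ`,
and `∫ W(μ x) |ψ(x)|² dx = μ⁻¹ ∫ W |φ|²`. Hence every constraint on `φ` is equivalent
to the corresponding constraint on `ψ`, the objective value of `ψ` is `μ I_V(φ)`, so the second
set of values is the first one scaled by `μ > 0` and so is its infimum.
-/

def rescale {F E : Type*} [SMul ℝ F] [SMul ℝ E] (c : ℝ) (φ : F → E) : F → E :=
  fun x => c • φ (c • x)

section Rescale

variable {F E : Type*} [NormedAddCommGroup F] [NormedSpace ℝ F]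
  [NormedAddCommGroup E] [NormedSpace ℝ E]

theorem rescale_apply (c : ℝ) (φ : F → E) (x : F) : rescale c φ x = c • φ (c • x) := rfl

theorem rescale_one (φ : F → E) : rescale 1 φ = φ := by
  funext x
  simp [rescale]

theorem rescale_rescale (a b : ℝ) (φ : F → E) : rescale a (rescale b φ) = rescale (a * b) φ := by
  funext x
  simp only [rescale, smul_smul, mul_comm b a]

theorem rescale_surjective {c : ℝ} (hc : c ≠ 0) : Function.Surjective (rescale c : (F → E) → F → E) :=
  fun ψ => ⟨rescale c⁻¹ ψ, by rw [rescale_rescale, mul_inv_cancel₀ hc, rescale_one]⟩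

theorem Differentiable.rescale {φ : F → E} (hφ : Differentiable ℝ φ) (c : ℝ) :
    Differentiable ℝ (rescale c φ) :=
  (hφ.comp (differentiable_id.const_smul c)).const_smul c

theorem differentiable_rescale_iff {c : ℝ} (hc : c ≠ 0) {φ : F → E} :
    Differentiable ℝ (rescale c φ) ↔ Differentiable ℝ φ := by
  refine ⟨fun h => ?_, fun h => h.rescale c⟩
  simpa [rescale_rescale, inv_mul_cancel₀ hc, rescale_one] using h.rescale c⁻¹

theorem fderiv_rescale (c : ℝ) (φ : F → E) :
    fderiv ℝ (rescale c φ) = c • rescale c (fderiv ℝ φ) := by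
  funext x
  change fderiv ℝ (c • fun y => φ (c • y)) x = _
  rw [fderiv_const_smul_field, Pi.smul_apply, fderiv_comp_smul]
  rfl

variable [MeasurableSpace F] [BorelSpace F] [FiniteDimensional ℝ F]
  (ν : Measure F) [ν.IsAddHaarMeasure]

theorem integral_mul_norm_rescale_pow {c : ℝ} (hc : 0 < c) (W : F → ℝ) (φ : F → E) (p : ℕ) :
    ∫ x, W (c • x) * ‖rescale c φ x‖ ^ p ∂ν
      = c ^ p / c ^ Module.finrank ℝ F * ∫ x, W x * ‖φ x‖ ^ p ∂ν := by
  have hpull : ∀ x, W (c • x) * ‖rescale c φ x‖ ^ p = c ^ p * (W (c • x) * ‖φ (c • x)‖ ^ p) := by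
    intro x
    rw [rescale_apply, norm_smul, Real.norm_of_nonneg hc.le, mul_pow]
    ring
  simp_rw [hpull]
  rw [integral_const_mul, Measure.integral_comp_smul ν (fun y => W y * ‖φ y‖ ^ p),
    smul_eq_mul, abs_of_pos (by positivity)]
  ring

theorem integrable_norm_rescale_pow_iff {c : ℝ} (hc : c ≠ 0) (φ : F → E) (p : ℕ) :
    Integrable (fun x => ‖rescale c φ x‖ ^ p) ν ↔ Integrable (fun x => ‖φ x‖ ^ p) ν := by
  have hpull : (fun x => ‖rescale c φ x‖ ^ p) = fun x => |c| ^ p * ‖φ (c • x)‖ ^ p := by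
    funext x
    rw [rescale_apply, norm_smul, Real.norm_eq_abs, mul_pow]
  rw [hpull, integrable_const_mul_iff (IsUnit.mk0 _ (by positivity)),
    integrable_comp_smul_iff ν (fun y => ‖φ y‖ ^ p) hc]

theorem integrable_norm_fderiv_rescale_pow_iff {c : ℝ} (hc : c ≠ 0) (φ : F → E) (p : ℕ) :
    Integrable (fun x => ‖fderiv ℝ (rescale c φ) x‖ ^ p) ν
      ↔ Integrable (fun x => ‖fderiv ℝ φ x‖ ^ p) ν := by
  have hpull : (fun x => ‖fderiv ℝ (rescale c φ) x‖ ^ p)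
      = fun x => |c| ^ p * ‖rescale c (fderiv ℝ φ) x‖ ^ p := by
    funext x
    rw [fderiv_rescale, Pi.smul_apply, norm_smul, Real.norm_eq_abs, mul_pow]
  rw [hpull, integrable_const_mul_iff (IsUnit.mk0 _ (by positivity)),
    integrable_norm_rescale_pow_iff ν hc (fderiv ℝ φ) p]

end Rescale

section ThreeDimensional

variable {E : Type*} [NormedAddCommGroup E] [NormedSpace ℝ E] {c : ℝ}

theorem integral_sq_mul_norm_rescale_sq (hc : 0 < c) (W : R3 → ℝ) (φ : R3 → E) :
    ∫ x, c ^ 2 * W (c • x) * ‖rescale c φ x‖ ^ 2 = c * ∫ x, W x * ‖φ x‖ ^ 2 := by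
  simp_rw [mul_assoc]
  rw [integral_const_mul, integral_mul_norm_rescale_pow volume hc, finrank_euclideanSpace_fin]
  field_simp

theorem Mfun_rescale (hc : 0 < c) (φ : R3 → E) : Mfun (rescale c φ) = c⁻¹ * Mfun φ := by
  have h := integral_mul_norm_rescale_pow volume hc (fun _ => 1) φ 2
  simp only [one_mul, finrank_euclideanSpace_fin] at h
  rw [Mfun, Mfun, h]
  field_simp

theorem Gfun_rescale (hc : 0 < c) (φ : R3 → E) : Gfun (rescale c φ) = c * Gfun φ := by
  have h := integral_mul_norm_rescale_pow volume hc (fun _ => 1) φ 4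
  simp only [one_mul, finrank_euclideanSpace_fin] at h
  rw [Gfun, Gfun, h]
  field_simp

theorem H0_rescale (hc : 0 < c) (φ : R3 → E) : H0 (rescale c φ) = c * H0 φ := by
  have h := integral_sq_mul_norm_rescale_sq hc (fun _ => 1) (fderiv ℝ φ)
  simp only [mul_one, one_mul] at h
  simp only [H0, fderiv_rescale, Pi.smul_apply, norm_smul, Real.norm_of_nonneg hc.le, mul_pow, h]
  ring

theorem K02_rescale_sub (hc : 0 < c) (V : R3 → ℝ) (φ : R3 → E) :
    K02 (rescale c φ) - (1 / 2) * ∫ x, c ^ 2 * xdV V (c • x) * ‖rescale c φ x‖ ^ 2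
      = c * K2 V φ := by
  rw [K02, K2, H0_rescale hc, Gfun_rescale hc, integral_sq_mul_norm_rescale_sq hc]
  ring

theorem K02_rescale_le_iff (hc : 0 < c) (V : R3 → ℝ) (φ : R3 → E) :
    K02 (rescale c φ) ≤ (1 / 2) * ∫ x, c ^ 2 * xdV V (c • x) * ‖rescale c φ x‖ ^ 2
      ↔ K2 V φ ≤ 0 := by
  rw [← sub_nonpos, K02_rescale_sub hc]
  exact ⟨fun h => nonpos_of_mul_nonpos_right h hc, mul_nonpos_of_nonneg_of_nonpos hc.le⟩

theorem IV_eq_of_rescale (hc : 0 < c) (V : R3 → ℝ) (φ : R3 → E) :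
    (1 / 2) * Gfun (rescale c φ)
        + (1 / 4) * ∫ x, c ^ 2 * (xdV V (c • x) + 2 * V (c • x)) * ‖rescale c φ x‖ ^ 2
      = c * IV V φ := by
  rw [IV, Gfun_rescale hc,
    integral_sq_mul_norm_rescale_sq hc (fun y => xdV V y + 2 * V y)]
  ring

end ThreeDimensional

open Pointwise in
theorem stmt6_general (V : R3 → ℝ) (μ : ℝ) (hμ : 0 < μ) :
    μ * sInf {r : ℝ | ∃ φ : R3 → ℂ,
        Differentiable ℝ φ ∧
        Integrable (fun x => ‖φ x‖ ^ 2) ∧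
        Integrable (fun x => ‖fderiv ℝ φ x‖ ^ 2) ∧
        Integrable (fun x => ‖φ x‖ ^ 4) ∧
        Mfun φ ≤ μ ∧ K2 V φ ≤ 0 ∧ 1 ≤ Gfun φ ∧ r = IV V φ}
    = sInf {r : ℝ | ∃ ψ : R3 → ℂ,
        Differentiable ℝ ψ ∧
        Integrable (fun x => ‖ψ x‖ ^ 2) ∧
        Integrable (fun x => ‖fderiv ℝ ψ x‖ ^ 2) ∧
        Integrable (fun x => ‖ψ x‖ ^ 4) ∧
        Mfun ψ ≤ 1 ∧
        K02 ψ ≤ (1 / 2) * ∫ x, μ ^ 2 * xdV V (μ • x) * ‖ψ x‖ ^ 2 ∧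
        μ ≤ Gfun ψ ∧
        r = (1 / 2) * Gfun ψ
          + (1 / 4) * ∫ x, μ ^ 2 * (xdV V (μ • x) + 2 * V (μ • x)) * ‖ψ x‖ ^ 2} := by
  rw [← smul_eq_mul, ← Real.sInf_smul_of_nonneg hμ.le]
  congr 1
  ext r
  rw [Set.mem_ofPred_eq, (rescale_surjective hμ.ne').exists]
  simp only [Set.mem_smul_set, Set.mem_ofPred_eq, smul_eq_mul, IV_eq_of_rescale hμ,
    K02_rescale_le_iff hμ]
  simp only [differentiable_rescale_iff hμ.ne', integrable_norm_rescale_pow_iff volume hμ.ne',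
    integrable_norm_fderiv_rescale_pow_iff volume hμ.ne', Mfun_rescale hμ, Gfun_rescale hμ,
    inv_mul_le_one₀ hμ, le_mul_iff_one_le_right hμ]
  constructor
  · rintro ⟨_, ⟨φ, hφ, h2, hD, h4, hM, hK, hG, rfl⟩, rfl⟩
    exact ⟨φ, hφ, h2, hD, h4, hM, hK, hG, rfl⟩
  · rintro ⟨φ, hφ, h2, hD, h4, hM, hK, hG, rfl⟩
    exact ⟨_, ⟨φ, hφ, h2, hD, h4, hM, hK, hG, rfl⟩, rfl⟩

/-- Rescaled formulation of the modified excited-state minimization problem: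
`μ · ℰ̃₁(μ)` equals the infimum of the rescaled functional over the rescaled
admissible set (the two sets corresponding via `ψ(x) = μ φ(μx)`). -/
theorem stmt6 (V : R3 → ℝ) (hV : Differentiable ℝ V)
    (hVbd : ∃ C, ∀ x, |V x| ≤ C) (hxdVbd : ∃ C, ∀ x, |xdV V x| ≤ C)
    (μ : ℝ) (hμ : 0 < μ) :
    μ * sInf {r : ℝ | ∃ φ : R3 → ℂ,
        Differentiable ℝ φ ∧
        Integrable (fun x => ‖φ x‖ ^ 2) ∧
        Integrable (fun x => ‖fderiv ℝ φ x‖ ^ 2) ∧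
        Integrable (fun x => ‖φ x‖ ^ 4) ∧
        Mfun φ ≤ μ ∧ K2 V φ ≤ 0 ∧ 1 ≤ Gfun φ ∧ r = IV V φ}
    = sInf {r : ℝ | ∃ ψ : R3 → ℂ,
        Differentiable ℝ ψ ∧
        Integrable (fun x => ‖ψ x‖ ^ 2) ∧
        Integrable (fun x => ‖fderiv ℝ ψ x‖ ^ 2) ∧
        Integrable (fun x => ‖ψ x‖ ^ 4) ∧
        Mfun ψ ≤ 1 ∧
        K02 ψ ≤ (1 / 2) * ∫ x, μ ^ 2 * xdV V (μ • x) * ‖ψ x‖ ^ 2 ∧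
        μ ≤ Gfun ψ ∧
        r = (1 / 2) * Gfun ψ
          + (1 / 4) * ∫ x, μ ^ 2 * (xdV V (μ • x) + 2 * V (μ • x)) * ‖ψ x‖ ^ 2} :=
  stmt6_general V μ hμ
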